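/- Let θ_0 ∈ [0, π/2) and let {c_n}_{n∈ℤ} be a complex sequence such that c_n ∈ K(θ_0) and c_n + c_{−n} ∈ K(θ_0) for all n ≥ 1, where K(θ_0) = {z ∈ ℂ : |arg z| ≤ θ_0}. Suppose there exist λ ≥ 2 and a constant C > 0 such that ∑_{k=n}^{2n} |c_k − c_{k+1}| ≤ (C/n)·∑_{k=⌊n/λ⌋}^{⌊λn⌋} |c_k| for all n ≥ 1. If the symmetric partial sums S_n(f,x) = ∑_{k=−n}^{n} c_k e^{ikx} converge uniformly on ℝ to a continuous 2π-periodic function f, then lim_{n→∞} n·c_n = 0. -/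

import Mathlib

open Filter

/-- The `n`-th symmetric partial sum `∑_{k=-n}^{n} c_k e^{ikx}` of a trigonometric series. -/
noncomputable def symPartialSum (c : ℤ → ℂ) (n : ℕ) (x : ℝ) : ℂ :=
  ∑ k ∈ Finset.Icc (-(n : ℤ)) (n : ℤ), c k * Complex.exp ((k : ℂ) * x * Complex.I)

/-!
Uniform convergence makes the blocks `S_b - S_{a-1}` of the series uniformly small. Take the
block `a = ⌊n/λ⌋ ≤ k ≤ b = ⌊λn⌋`. Its value at `0` is `∑ (c_k + c_{-k})`, and the sector
condition (real part at least `cos θ₀` times the modulus) turns this into a bound on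
`∑ |c_k + c_{-k}|`. Its odd part at `±1/b` is `2i ∑ (c_k - c_{-k}) sin(k/b)`; together with the
previous bound this controls `∑ c_k sin(k/b)`, and since `sin(k/b) ≥ sin(1/(2λ²))` on the block,
the sector condition once more bounds `∑_{a ≤ k ≤ b} |c_k|`, which therefore tends to zero.
Finally, summing `|c_n| ≤ |c_m| + ∑_{n ≤ k ≤ 2n} |c_k - c_{k+1}|` over `n ≤ m ≤ 2n` and applying
the mean value bounded variation condition bounds `n |c_n|` by `(1 + 2C)` times the same block sum.
-/

open Finset Topology Complex

lemma cos_mul_norm_le_re_of_abs_arg_le {z : ℂ} {θ : ℝ} (hθ : θ ≤ Real.pi) (h : |z.arg| ≤ θ) :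
    Real.cos θ * ‖z‖ ≤ z.re := by
  rw [← norm_mul_cos_arg z, ← Real.cos_abs z.arg, mul_comm]
  exact mul_le_mul_of_nonneg_left
    (Real.cos_le_cos_of_nonneg_of_le_pi (abs_nonneg _) hθ h) (norm_nonneg _)

lemma mul_sum_norm_le_norm_sum {ι : Type*} {s : Finset ι} {z : ι → ℂ} {γ : ℝ}
    (h : ∀ k ∈ s, γ * ‖z k‖ ≤ (z k).re) : γ * ∑ k ∈ s, ‖z k‖ ≤ ‖∑ k ∈ s, z k‖ :=
  calc γ * ∑ k ∈ s, ‖z k‖ ≤ ∑ k ∈ s, (z k).re := by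
        rw [mul_sum]; exact sum_le_sum h
    _ = (∑ k ∈ s, z k).re := (re_sum _ _).symm
    _ ≤ ‖∑ k ∈ s, z k‖ := re_le_norm _

noncomputable def symTerm (c : ℤ → ℂ) (k : ℕ) (x : ℝ) : ℂ :=
  c k * exp (k * x * I) + c (-k) * exp (-k * x * I)

lemma symTerm_zero (c : ℤ → ℂ) (k : ℕ) : symTerm c k 0 = c k + c (-k) := by
  simp [symTerm]

lemma symTerm_sub_symTerm_neg (c : ℤ → ℂ) (k : ℕ) (x : ℝ) :
    symTerm c k x - symTerm c k (-x) = 2 * I * ((c k - c (-k)) * Real.sin (k * x)) := by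
  have h := two_sin (k * x)
  simp only [symTerm, ofReal_neg, ofReal_sin, ofReal_mul, ofReal_natCast, neg_mul, mul_neg,
    neg_neg] at h ⊢
  linear_combination -(c k - c (-k)) * I * h
    + (c k - c (-k)) * (exp (k * x * I) - exp (-(k * x * I))) * I_sq

lemma symPartialSum_sub_symPartialSum (c : ℤ → ℂ) {a b : ℕ} (hab : a ≤ b) (x : ℝ) :
    symPartialSum c b x - symPartialSum c a x = ∑ k ∈ Ioc a b, symTerm c k x := by
  induction b, hab using Nat.le_induction with
  | base => simp
  | succ b hab ih =>
    have hIcc : Icc (-((b + 1 : ℕ) : ℤ)) (b + 1 : ℕ) =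
        insert (-((b + 1 : ℕ) : ℤ)) (insert ((b + 1 : ℕ) : ℤ) (Icc (-(b : ℤ)) b)) := by
      ext k; simp; omega
    rw [sum_Ioc_succ_top (by omega), ← ih, symPartialSum, hIcc, sum_insert (by simp; omega),
      sum_insert (by simp), ← symPartialSum, symTerm]
    push_cast
    ring

lemma mul_sum_norm_le_of_cone {c : ℤ → ℂ} {T : Finset ℕ} {γ s x : ℝ} (hγ : 0 ≤ γ) (hs : 0 ≤ s)
    (hcone : ∀ k ∈ T, γ * ‖c k‖ ≤ (c k).re ∧ γ * ‖c k + c (-k)‖ ≤ (c k + c (-k)).re)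
    (hsin : ∀ k ∈ T, s ≤ Real.sin (k * x)) :
    4 * γ ^ 2 * s * ∑ k ∈ T, ‖c k‖ ≤
      γ * (‖∑ k ∈ T, symTerm c k x‖ + ‖∑ k ∈ T, symTerm c k (-x)‖)
        + 2 * ‖∑ k ∈ T, symTerm c k 0‖ := by
  set A := ∑ k ∈ T, ‖c k + c (-k)‖
  set B := ∑ k ∈ T, c k * Real.sin (k * x)
  have hA : γ * A ≤ ‖∑ k ∈ T, symTerm c k 0‖ := by
    simpa only [symTerm_zero] using mul_sum_norm_le_norm_sum fun k hk => (hcone k hk).2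
  have hB : γ * (s * ∑ k ∈ T, ‖c k‖) ≤ ‖B‖ := by
    refine le_trans (mul_le_mul_of_nonneg_left ?_ hγ) (mul_sum_norm_le_norm_sum fun k hk => ?_)
    · rw [mul_sum]
      refine sum_le_sum fun k hk => ?_
      rw [norm_mul, norm_real, Real.norm_of_nonneg (hs.trans (hsin k hk)), mul_comm]
      exact mul_le_mul_of_nonneg_left (hsin k hk) (norm_nonneg _)
    · rw [norm_mul, norm_real, Real.norm_of_nonneg (hs.trans (hsin k hk)), re_mul_ofReal]
      nlinarith [(hcone k hk).1, hs.trans (hsin k hk)]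
  -- The odd part of the block controls the sine sum of `c k - c (-k)`; the even part at `0`
  -- controls the one of `c k + c (-k)`, and the two add up to `2B`.
  have hsplit : 4 * I * B = (∑ k ∈ T, symTerm c k x - ∑ k ∈ T, symTerm c k (-x))
      + 2 * I * ∑ k ∈ T, (c k + c (-k)) * Real.sin (k * x) := by
    simp only [B, ← sum_sub_distrib, symTerm_sub_symTerm_neg, mul_sum, ← sum_add_distrib]
    exact sum_congr rfl fun k _ => by ring
  have hsin_sum : ‖∑ k ∈ T, (c k + c (-k)) * Real.sin (k * x)‖ ≤ A := by
    refine (norm_sum_le _ _).trans (sum_le_sum fun k _ => ?_)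
    rw [norm_mul, norm_real]
    exact mul_le_of_le_one_right (norm_nonneg _) (Real.abs_sin_le_one _)
  have h4B : 4 * ‖B‖ ≤ ‖∑ k ∈ T, symTerm c k x‖ + ‖∑ k ∈ T, symTerm c k (-x)‖ + 2 * A := by
    calc 4 * ‖B‖ = ‖4 * I * B‖ := by simp
      _ ≤ ‖∑ k ∈ T, symTerm c k x - ∑ k ∈ T, symTerm c k (-x)‖
          + 2 * ‖∑ k ∈ T, (c k + c (-k)) * Real.sin (k * x)‖ := by
        rw [hsplit]; exact (norm_add_le _ _).trans_eq (by simp)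
      _ ≤ _ := by gcongr; exact norm_sub_le _ _
  linarith [mul_le_mul_of_nonneg_left hB hγ, mul_le_mul_of_nonneg_left h4B hγ]

lemma TendstoUniformly.tendsto_comp_sub {ι α β κ : Type*} [SeminormedAddCommGroup β]
    {F : ι → α → β} {f : α → β} {p : Filter ι} (h : TendstoUniformly F f p)
    {l : Filter κ} {u : κ → ι} (hu : Tendsto u l p) (y : κ → α) :
    Tendsto (fun n => F (u n) (y n) - f (y n)) l (𝓝 0) := by
  have := tendsto_uniformity_iff_dist_tendsto_zero.1
    ((tendstoUniformly_iff_tendsto.1 h).comp (hu.prodMk (tendsto_top (f := y))))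
  simpa [dist_eq_norm', tendsto_zero_iff_norm_tendsto_zero] using this

section FloorBlock

variable {lam : ℝ} {n : ℕ}

lemma floor_div_le_floor_mul (hlam : 1 ≤ lam) : ⌊n / lam⌋₊ ≤ ⌊lam * n⌋₊ := by
  gcongr
  calc (n : ℝ) / lam ≤ n := div_le_self n.cast_nonneg hlam
    _ ≤ lam * n := le_mul_of_one_le_left n.cast_nonneg hlam

lemma one_le_floor_div (hlam : 0 < lam) (hn : 2 * lam ≤ n) : 1 ≤ ⌊n / lam⌋₊ :=
  Nat.le_floor (by rw [le_div_iff₀ hlam]; push_cast; linarith)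

lemma inv_two_mul_sq_le_div_floor (hlam : 1 ≤ lam) (hn : 2 * lam ≤ n) {k : ℕ}
    (hk : ⌊n / lam⌋₊ ≤ k) : 1 / (2 * lam ^ 2) ≤ k / ⌊lam * n⌋₊ := by
  have hlam0 : 0 < lam := by linarith
  have hb : (⌊lam * n⌋₊ : ℝ) ≤ lam * n := Nat.floor_le (by positivity)
  have hb1 : (1 : ℝ) ≤ ⌊lam * n⌋₊ := by
    exact_mod_cast Nat.le_floor (by push_cast; nlinarith)
  have ha : (n : ℝ) / (2 * lam) ≤ k := by
    have h1 : (n : ℝ) / lam - 1 < ⌊n / lam⌋₊ := Nat.sub_one_lt_floor _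
    have h2 : (n : ℝ) / (2 * lam) ≤ n / lam - 1 := by
      rw [div_sub' hlam0.ne', div_le_div_iff₀ (by positivity) hlam0]; nlinarith
    have h3 : ((⌊n / lam⌋₊ : ℕ) : ℝ) ≤ k := by exact_mod_cast hk
    linarith
  rw [div_le_div_iff₀ (by positivity) (by linarith), one_mul]
  calc (⌊lam * n⌋₊ : ℝ) ≤ lam * n := hb
    _ = 2 * lam ^ 2 * (n / (2 * lam)) := by field_simp
    _ ≤ k * (2 * lam ^ 2) := by rw [mul_comm (k : ℝ)]; gcongr

lemma sin_le_sin_mul_inv_floor {k : ℕ} (hlam : 1 ≤ lam) (hn : 2 * lam ≤ n)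
    (hk : k ∈ Icc ⌊n / lam⌋₊ ⌊lam * n⌋₊) :
    Real.sin (1 / (2 * lam ^ 2)) ≤ Real.sin (k * (1 / ⌊lam * n⌋₊)) := by
  rw [mem_Icc] at hk
  have hkb : (k : ℝ) / ⌊lam * n⌋₊ ≤ 1 := div_le_one_of_le₀ (by exact_mod_cast hk.2) (by positivity)
  rw [mul_one_div]
  have hδ : 0 ≤ 1 / (2 * lam ^ 2) := by positivity
  exact Real.sin_le_sin_of_le_of_le_pi_div_two (by linarith [Real.pi_pos])
    (by linarith [Real.pi_gt_three]) (inv_two_mul_sq_le_div_floor hlam hn hk.1)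

end FloorBlock

theorem tendsto_sum_norm_Icc_floor_of_cone {c : ℤ → ℂ} {f : ℝ → ℂ} {γ lam : ℝ} (hγ : 0 < γ)
    (hlam : 1 ≤ lam)
    (hcone : ∀ k : ℕ, 1 ≤ k → γ * ‖c k‖ ≤ (c k).re ∧ γ * ‖c k + c (-k)‖ ≤ (c k + c (-k)).re)
    (hunif : TendstoUniformly (fun (n : ℕ) (x : ℝ) => symPartialSum c n x) f atTop) :
    Tendsto (fun n : ℕ => ∑ k ∈ Icc ⌊n / lam⌋₊ ⌊lam * n⌋₊, ‖c k‖) atTop (𝓝 0) := by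
  set a : ℕ → ℕ := fun n => ⌊n / lam⌋₊
  set b : ℕ → ℕ := fun n => ⌊lam * n⌋₊
  set P : ℕ → ℝ → ℂ := fun n x => symPartialSum c (b n) x - symPartialSum c (a n - 1) x
  set s := Real.sin (1 / (2 * lam ^ 2))
  have hs : 0 < s := Real.sin_pos_of_pos_of_lt_pi (by positivity) (by
    have : 1 / (2 * lam ^ 2) ≤ 1 / 2 := by gcongr; nlinarith
    linarith [Real.pi_gt_three])
  have hnat : Tendsto (fun n : ℕ => (n : ℝ)) atTop atTop := tendsto_natCast_atTop_atTop
  have ha : Tendsto (fun n => a n - 1) atTop atTop := (tendsto_sub_atTop_nat 1).comp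
    (tendsto_nat_floor_atTop.comp (hnat.atTop_div_const (by linarith)))
  have hb : Tendsto b atTop atTop :=
    tendsto_nat_floor_atTop.comp (hnat.const_mul_atTop (by linarith))
  have hP : ∀ y : ℕ → ℝ, Tendsto (fun n => ‖P n (y n)‖) atTop (𝓝 0) := fun y => by
    simpa [P] using ((hunif.tendsto_comp_sub hb y).sub (hunif.tendsto_comp_sub ha y)).norm
  have hR := ((((hP fun n => 1 / b n).add (hP fun n => -(1 / b n))).const_mul γ).add
    ((hP fun _ => 0).const_mul 2)).div_const (4 * γ ^ 2 * s)
  simp only [add_zero, mul_zero, zero_div] at hR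
  refine squeeze_zero' (.of_forall fun n => sum_nonneg fun _ _ => norm_nonneg _) ?_ hR
  filter_upwards [hnat.eventually_ge_atTop (2 * lam)] with n hn
  have ha1 : 1 ≤ a n := one_le_floor_div (by linarith) hn
  have hPn : ∀ x, P n x = ∑ k ∈ Icc (a n) (b n), symTerm c k x := fun x => by
    rw [show P n x = _ from symPartialSum_sub_symPartialSum c
        ((a n).sub_le 1 |>.trans (floor_div_le_floor_mul hlam)) x,
      ← Icc_add_one_left_eq_Ioc, Nat.sub_add_cancel ha1]
  rw [le_div_iff₀ (by positivity), mul_comm, hPn, hPn, hPn]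
  exact mul_sum_norm_le_of_cone hγ.le hs.le
    (fun k hk => hcone k (ha1.trans (mem_Icc.1 hk).1))
    fun k hk => sin_le_sin_mul_inv_floor hlam hn hk

section BoundedVariation

variable {E : Type*} [SeminormedAddCommGroup E] (d : ℕ → E)

lemma norm_le_norm_add_sum_norm_sub {n m : ℕ} (h : n ≤ m) :
    ‖d n‖ ≤ ‖d m‖ + ∑ k ∈ Ico n m, ‖d k - d (k + 1)‖ :=
  calc ‖d n‖ ≤ ‖d m‖ + ‖d m - d n‖ := norm_le_insert _ _
    _ = ‖d m‖ + ‖∑ k ∈ Ico n m, (d (k + 1) - d k)‖ := by rw [sum_Ico_sub d h]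
    _ ≤ ‖d m‖ + ∑ k ∈ Ico n m, ‖d k - d (k + 1)‖ := by
      gcongr
      exact (norm_sum_le _ _).trans_eq (sum_congr rfl fun _ _ => norm_sub_rev _ _)

lemma succ_mul_norm_le (n : ℕ) :
    (n + 1) * ‖d n‖ ≤
      ∑ m ∈ Icc n (2 * n), ‖d m‖ + (n + 1) * ∑ k ∈ Icc n (2 * n), ‖d k - d (k + 1)‖ := by
  have hcard : ((Icc n (2 * n)).card : ℝ) = n + 1 := by
    rw [Nat.card_Icc]; push_cast [show 2 * n + 1 - n = n + 1 by omega]; ring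
  have h := sum_le_sum fun m (hm : m ∈ Icc n (2 * n)) =>
    calc ‖d n‖ ≤ ‖d m‖ + ∑ k ∈ Ico n m, ‖d k - d (k + 1)‖ :=
          norm_le_norm_add_sum_norm_sub d (mem_Icc.1 hm).1
      _ ≤ ‖d m‖ + ∑ k ∈ Icc n (2 * n), ‖d k - d (k + 1)‖ := by
          gcongr
          exact Ico_subset_Icc_self.trans (Icc_subset_Icc_right (mem_Icc.1 hm).2)
  rwa [sum_const, sum_add_distrib, sum_const, nsmul_eq_mul, nsmul_eq_mul, hcard] at h

lemma nat_mul_norm_le_of_sum_norm_sub_le {lam C : ℝ} (hlam : 2 ≤ lam) (hC : 0 ≤ C) {n : ℕ}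
    (hn : 1 ≤ n)
    (hvar : ∑ k ∈ Icc n (2 * n), ‖d k - d (k + 1)‖ ≤
      C / n * ∑ k ∈ Icc ⌊(n : ℝ) / lam⌋₊ ⌊lam * n⌋₊, ‖d k‖) :
    n * ‖d n‖ ≤ (1 + 2 * C) * ∑ k ∈ Icc ⌊(n : ℝ) / lam⌋₊ ⌊lam * n⌋₊, ‖d k‖ := by
  set S := ∑ k ∈ Icc ⌊(n : ℝ) / lam⌋₊ ⌊lam * n⌋₊, ‖d k‖
  have hn' : (1 : ℝ) ≤ n := by exact_mod_cast hn
  have hsub : ∑ m ∈ Icc n (2 * n), ‖d m‖ ≤ S := by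
    refine sum_le_sum_of_subset_of_nonneg (Icc_subset_Icc ?_ ?_) fun _ _ _ => norm_nonneg _
    · exact Nat.floor_le_of_le (div_le_self n.cast_nonneg (by linarith))
    · exact Nat.le_floor (by push_cast; nlinarith)
  have hS : 0 ≤ S := sum_nonneg fun _ _ => norm_nonneg _
  have hvar' : (n + 1) * ∑ k ∈ Icc n (2 * n), ‖d k - d (k + 1)‖ ≤ 2 * C * S :=
    calc _ ≤ (n + 1) * (C / n * S) := by gcongr
      _ = (1 + 1 / n) * C * S := by field_simp
      _ ≤ 2 * C * S := by gcongr; linarith [(div_le_one (by positivity)).2 hn']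
  nlinarith [succ_mul_norm_le d n, norm_nonneg (d n)]

end BoundedVariation

theorem stmt11 (θ₀ : ℝ) (hθ₀ : 0 ≤ θ₀) (hθ₁ : θ₀ < Real.pi / 2)
    (c : ℤ → ℂ)
    (hsector : ∀ n : ℕ, 1 ≤ n →
      |Complex.arg (c n)| ≤ θ₀ ∧ |Complex.arg (c n + c (-(n : ℤ)))| ≤ θ₀)
    (lam : ℝ) (hlam : 2 ≤ lam) (C : ℝ) (hC : 0 < C)
    (hMVBV : ∀ n : ℕ, 1 ≤ n →
      ∑ k ∈ Finset.Icc n (2 * n), ‖c k - c (k + 1)‖ ≤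
        (C / n) * ∑ k ∈ Finset.Icc ⌊(n : ℝ) / lam⌋₊ ⌊lam * n⌋₊, ‖c k‖)
    (f : ℝ → ℂ)
    (hunif : TendstoUniformly (fun (n : ℕ) (x : ℝ) => symPartialSum c n x) f atTop) :
    Tendsto (fun n : ℕ => (n : ℂ) * c n) atTop (nhds 0) := by
  have hγ : 0 < Real.cos θ₀ := Real.cos_pos_of_mem_Ioo ⟨by linarith [Real.pi_pos], hθ₁⟩
  have hcone : ∀ k : ℕ, 1 ≤ k → Real.cos θ₀ * ‖c k‖ ≤ (c k).re ∧
      Real.cos θ₀ * ‖c k + c (-k)‖ ≤ (c k + c (-k)).re := fun k hk =>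
    ⟨cos_mul_norm_le_re_of_abs_arg_le (by linarith) (hsector k hk).1,
      cos_mul_norm_le_re_of_abs_arg_le (by linarith) (hsector k hk).2⟩
  have hblock := tendsto_sum_norm_Icc_floor_of_cone hγ (one_le_two.trans hlam) hcone hunif
  refine squeeze_zero_norm' ?_ (by simpa using hblock.const_mul (1 + 2 * C))
  filter_upwards [eventually_ge_atTop 1] with n hn
  simpa using nat_mul_norm_le_of_sum_norm_sub_le (fun k : ℕ => c k) hlam hC.le hn
    (by simpa using hMVBV n hn)
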